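/- arXiv:1210.3539 — 3 statements merged into one kernel-verified Lean document; each statement's English description precedes it below -/
import Mathlib

section
/- An eventually periodic weight sequence satisfies the energy objective for some initial credit if and only if the sum of weights over one period is nonnegative. -/
/-!
Writing `P` for the weight of one period, the partial sums satisfy `EL (n + m q) = EL n + m P`
for `n ≥ p`. If `P < 0` they therefore drop below any credit along `p + m q`. If `P ≥ 0`, every
partial sum dominates one of the finitely many `EL m` with `m < p + q`, so it is bounded below.
-/

open Finset

section Periodic

variable {M : Type*} {w : ℕ → M} {p q : ℕ}

theorem sum_range_window_eq_of_eventually_periodic [AddCancelCommMonoid M]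
    (hper : ∀ n, p ≤ n → w (n + q) = w n) {n : ℕ} (hn : p ≤ n) :
    ∑ k ∈ range q, w (n + k) = ∑ k ∈ range q, w (p + k) := by
  induction n, hn using Nat.le_induction with
  | base => rfl
  | succ n hn ih =>
    rw [← ih]
    apply add_right_cancel (b := w n)
    calc ∑ k ∈ range q, w (n + 1 + k) + w n
        = ∑ k ∈ range (q + 1), w (n + k) := by
          simp only [sum_range_succ', add_zero, add_assoc, add_comm 1]
      _ = ∑ k ∈ range q, w (n + k) + w n := by rw [sum_range_succ, hper n hn]

theorem sum_range_add_mul_period [AddCancelCommMonoid M]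
    (hper : ∀ n, p ≤ n → w (n + q) = w n) {n : ℕ} (hn : p ≤ n) (m : ℕ) :
    ∑ k ∈ range (n + m * q), w k = ∑ k ∈ range n, w k + m • ∑ k ∈ range q, w (p + k) := by
  induction m with
  | zero => simp
  | succ m ih =>
    rw [add_mul, one_mul, ← add_assoc, sum_range_add, ih,
      sum_range_window_eq_of_eventually_periodic hper (n := n + m * q) (by omega),
      succ_nsmul, add_assoc]

variable [AddCommGroup M] [LinearOrder M] [IsOrderedAddMonoid M]

theorem period_sum_nonneg_of_bddBelow [Archimedean M]
    (hper : ∀ n, p ≤ n → w (n + q) = w n)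
    (hbdd : BddBelow (Set.range fun n ↦ ∑ k ∈ range n, w k)) :
    0 ≤ ∑ k ∈ range q, w (p + k) := by
  by_contra! hP
  obtain ⟨b, hb⟩ := hbdd
  obtain ⟨m, hm⟩ := exists_lt_nsmul (neg_pos.2 hP) (∑ k ∈ range p, w k - b)
  have hle : b ≤ ∑ k ∈ range (p + m * q), w k := hb ⟨_, rfl⟩
  rw [sum_range_add_mul_period hper le_rfl] at hle
  rw [smul_neg, sub_lt_comm, sub_neg_eq_add] at hm
  exact hle.not_gt hm

theorem exists_lt_sum_range_le_of_period_sum_nonneg (hq : 0 < q)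
    (hper : ∀ n, p ≤ n → w (n + q) = w n) (hP : 0 ≤ ∑ k ∈ range q, w (p + k)) (n : ℕ) :
    ∃ m < p + q, ∑ k ∈ range m, w k ≤ ∑ k ∈ range n, w k := by
  by_cases hn : n < p
  · exact ⟨n, by omega, le_rfl⟩
  · refine ⟨p + (n - p) % q, by have := Nat.mod_lt (n - p) hq; omega, ?_⟩
    have hdecomp : n = p + (n - p) % q + (n - p) / q * q := by
      have := Nat.mod_add_div' (n - p) q; omega
    conv_rhs => rw [hdecomp, sum_range_add_mul_period hper (by omega)]
    exact le_add_of_nonneg_right (nsmul_nonneg hP _)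

theorem bddBelow_range_sum_range_iff [Archimedean M] (hq : 0 < q)
    (hper : ∀ n, p ≤ n → w (n + q) = w n) :
    BddBelow (Set.range fun n ↦ ∑ k ∈ range n, w k) ↔ 0 ≤ ∑ k ∈ range q, w (p + k) := by
  refine ⟨period_sum_nonneg_of_bddBelow hper, fun hP ↦ ?_⟩
  obtain ⟨b, hb⟩ := ((Set.finite_Iio (p + q)).image fun m ↦ ∑ k ∈ range m, w k).bddBelow
  refine ⟨b, ?_⟩
  rintro _ ⟨n, rfl⟩
  obtain ⟨m, hm, hle⟩ := exists_lt_sum_range_le_of_period_sum_nonneg hq hper hP n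
  exact (hb ⟨m, hm, rfl⟩).trans hle

end Periodic

theorem Int.exists_natCast_add_nonneg_iff_bddBelow (f : ℕ → ℤ) :
    (∃ c : ℕ, ∀ n, 0 ≤ (c : ℤ) + f n) ↔ BddBelow (Set.range f) := by
  constructor
  · rintro ⟨c, hc⟩
    exact ⟨-c, by rintro _ ⟨n, rfl⟩; linarith [hc n]⟩
  · rintro ⟨b, hb⟩
    exact ⟨(-b).toNat, fun n ↦ by linarith [hb ⟨n, rfl⟩, Int.self_le_toNat (-b)]⟩

/-- An eventually periodic weight sequence satisfies the energy objective for some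
initial credit iff the sum of the weights over one period is nonnegative. -/
theorem energy_iff_period_sum_nonneg (w : ℕ → ℤ) (p q : ℕ) (hq : 1 ≤ q)
    (hper : ∀ n, p ≤ n → w (n + q) = w n) :
    (∃ c₀ : ℕ, ∀ n, 0 ≤ (c₀ : ℤ) + ∑ k ∈ Finset.range n, w k) ↔
      0 ≤ ∑ k ∈ Finset.range q, w (p + k) := by
  rw [Int.exists_natCast_add_nonneg_iff_bddBelow]
  exact bddBelow_range_sum_range_iff hq hper
end

section
/- In a safety game, if the initial state belongs to the greatest fixpoint Win₁(α) of W ↦ α ∩ (CPre₁(W) ∪ CPre₂(W)), then Player 1 has a memoryless strategy such that every play compatible with it stays forever in Win₁(α) ⊆ α. -/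
/-!
`Win₁(α)` is a fixpoint, so from each of its Player 1 states some edge stays in `Win₁(α)` and
every edge out of its Player 2 states does. Playing such an edge whenever one exists (and an
arbitrary edge otherwise, which totality of `E` permits) is a memoryless strategy, and by
induction along the play every compatible play stays in `Win₁(α)`.
-/

/-- Controllable predecessors for Player 1 (states in `S₁`). -/
def CPre1 {S : Type} (S₁ : Set S) (E : Set (S × S)) (L : Set S) : Set S :=
  {s | s ∈ S₁ ∧ ∃ s', (s, s') ∈ E ∧ s' ∈ L}

/-- Controllable predecessors for Player 2 (states not in `S₁`). -/
def CPre2 {S : Type} (S₁ : Set S) (E : Set (S × S)) (L : Set S) : Set S :=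
  {s | s ∉ S₁ ∧ ∀ s', (s, s') ∈ E → s' ∈ L}

namespace SafetyGame

variable {S : Type} {S₁ : Set S} {E : Set (S × S)} {W : Set S}

def IsPlayConsistent (S₁ : Set S) (E : Set (S × S)) (lam : S → S) (ρ : ℕ → S) : Prop :=
  ∀ n, (ρ n ∈ S₁ → ρ (n + 1) = lam (ρ n)) ∧ (ρ n ∉ S₁ → (ρ n, ρ (n + 1)) ∈ E)

lemma exists_succ_mem_of_subset_cpre (hW : W ⊆ CPre1 S₁ E W ∪ CPre2 S₁ E W) {s : S}
    (hs : s ∈ W) (hs₁ : s ∈ S₁) : ∃ s', (s, s') ∈ E ∧ s' ∈ W := by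
  rcases hW hs with h | h
  · exact h.2
  · exact absurd hs₁ h.1

lemma succ_mem_of_subset_cpre (hW : W ⊆ CPre1 S₁ E W ∪ CPre2 S₁ E W) {s s' : S}
    (hs : s ∈ W) (hs₁ : s ∉ S₁) (hss' : (s, s') ∈ E) : s' ∈ W := by
  rcases hW hs with h | h
  · exact absurd h.1 hs₁
  · exact h.2 s' hss'

noncomputable def stayStrategy (htotal : ∀ s : S, ∃ s', (s, s') ∈ E) (W : Set S) (s : S) : S :=
  open Classical in
  if h : ∃ s', (s, s') ∈ E ∧ s' ∈ W then h.choose else (htotal s).choose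

lemma stayStrategy_mem_edge (htotal : ∀ s : S, ∃ s', (s, s') ∈ E) (s : S) :
    (s, stayStrategy htotal W s) ∈ E := by
  unfold stayStrategy
  split_ifs with h
  · exact h.choose_spec.1
  · exact (htotal s).choose_spec

lemma stayStrategy_mem (htotal : ∀ s : S, ∃ s', (s, s') ∈ E) {s : S}
    (h : ∃ s', (s, s') ∈ E ∧ s' ∈ W) : stayStrategy htotal W s ∈ W := by
  unfold stayStrategy
  rw [dif_pos h]
  exact h.choose_spec.2

lemma play_mem_of_subset_cpre (hW : W ⊆ CPre1 S₁ E W ∪ CPre2 S₁ E W) {lam : S → S}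
    (hlam : ∀ s ∈ W, s ∈ S₁ → lam s ∈ W) {ρ : ℕ → S} (hρ : IsPlayConsistent S₁ E lam ρ)
    (h₀ : ρ 0 ∈ W) (n : ℕ) : ρ n ∈ W := by
  induction n with
  | zero => exact h₀
  | succ n ih =>
    by_cases hs₁ : ρ n ∈ S₁
    · rw [(hρ n).1 hs₁]
      exact hlam _ ih hs₁
    · exact succ_mem_of_subset_cpre hW ih hs₁ ((hρ n).2 hs₁)

lemma exists_memoryless_strategy_of_subset_cpre (htotal : ∀ s : S, ∃ s', (s, s') ∈ E)
    (hW : W ⊆ CPre1 S₁ E W ∪ CPre2 S₁ E W) :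
    ∃ lam : S → S, (∀ s, (s, lam s) ∈ E) ∧
      ∀ ρ : ℕ → S, IsPlayConsistent S₁ E lam ρ → ρ 0 ∈ W → ∀ n, ρ n ∈ W :=
  ⟨stayStrategy htotal W, stayStrategy_mem_edge htotal, fun _ hρ h₀ =>
    play_mem_of_subset_cpre hW
      (fun _ hs hs₁ => stayStrategy_mem htotal (exists_succ_mem_of_subset_cpre hW hs hs₁)) hρ h₀⟩

end SafetyGame

open SafetyGame in
theorem safety_memoryless_winning_general (S : Type)
    (S₁ : Set S) (E : Set (S × S)) (s₀ : S)
    (htotal : ∀ s : S, ∃ s', (s, s') ∈ E)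
    (α Win : Set S)
    (hfix : Win = α ∩ (CPre1 S₁ E Win ∪ CPre2 S₁ E Win))
    (h₀ : s₀ ∈ Win) :
    Win ⊆ α ∧
    ∃ lam : S → S, (∀ s ∈ S₁, (s, lam s) ∈ E) ∧
      ∀ ρ : ℕ → S, ρ 0 = s₀ →
        (∀ n, (ρ n ∈ S₁ → ρ (n + 1) = lam (ρ n)) ∧
              (ρ n ∉ S₁ → (ρ n, ρ (n + 1)) ∈ E)) →
        ∀ n, ρ n ∈ Win := by
  have hWin : Win ⊆ α ∩ (CPre1 S₁ E Win ∪ CPre2 S₁ E Win) := hfix.le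
  obtain ⟨lam, hlam, hstay⟩ :=
    exists_memoryless_strategy_of_subset_cpre htotal (hWin.trans Set.inter_subset_right)
  exact ⟨hWin.trans Set.inter_subset_left, lam, fun s _ => hlam s,
    fun ρ hρ₀ hρ => hstay ρ hρ (hρ₀ ▸ h₀)⟩

/-- If the initial state belongs to the greatest fixpoint `Win₁(α)` of
`W ↦ α ∩ (CPre₁(W) ∪ CPre₂(W))`, then Player 1 has a memoryless strategy such that
every play compatible with it stays forever in `Win₁(α) ⊆ α`. -/
theorem safety_memoryless_winning (S : Type) [Fintype S]
    (S₁ : Set S) (E : Set (S × S)) (s₀ : S)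
    (htotal : ∀ s : S, ∃ s', (s, s') ∈ E)
    (α Win : Set S)
    (hfix : Win = α ∩ (CPre1 S₁ E Win ∪ CPre2 S₁ E Win))
    (hgreatest : ∀ W : Set S, W = α ∩ (CPre1 S₁ E W ∪ CPre2 S₁ E W) → W ⊆ Win)
    (h₀ : s₀ ∈ Win) :
    Win ⊆ α ∧
    ∃ lam : S → S, (∀ s ∈ S₁, (s, lam s) ∈ E) ∧
      ∀ ρ : ℕ → S, ρ 0 = s₀ →
        (∀ n, (ρ n ∈ S₁ → ρ (n + 1) = lam (ρ n)) ∧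
              (ρ n ∉ S₁ → (ρ n, ρ (n + 1)) ∈ E)) →
        ∀ n, ρ n ∈ Win :=
  safety_memoryless_winning_general S S₁ E s₀ htotal α Win hfix h₀
end

section
/- In the energy-to-safety reduction, the bounded energy-tracking construction is sound: if a play in the safety game G_C (states paired with truncated energy levels in {⊥,0,…,C}, starting at credit C, edges updating credit by c ⊕ w(e)) never reaches a state with credit ⊥, then the corresponding play in the original energy game satisfies the energy objective PosEnergy(C), i.e., C + EL(prefix) ≥ 0 for every prefix. -/
/-- The truncated energy domain `𝒞 = {⊥, 0, …, C}` is modelled inside `ℤ`, with `⊥`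
represented by `-1`. `c ⊕ k = min(C, c + k)` if `c ≠ ⊥` and `c + k ≥ 0`, else `⊥`. -/
def oplusC (C : ℕ) (c k : ℤ) : ℤ :=
  if c ≠ -1 ∧ 0 ≤ c + k then min (C : ℤ) (c + k) else -1

section TruncatedCredit

variable {C : ℕ} {c k : ℤ}

theorem oplusC_nonneg_of_ne_bot (h : oplusC C c k ≠ -1) : 0 ≤ oplusC C c k := by
  unfold oplusC at h ⊢
  split_ifs at h ⊢ with hcond
  · exact le_min (Int.natCast_nonneg C) hcond.2
  · exact absurd rfl h

theorem oplusC_le_add_of_ne_bot (h : oplusC C c k ≠ -1) : oplusC C c k ≤ c + k := by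
  unfold oplusC at h ⊢
  split_ifs at h ⊢
  · exact min_le_right _ _
  · exact absurd rfl h

end TruncatedCredit

theorem credit_le_add_sum_of_ne_bot {C : ℕ} (c k : ℕ → ℤ)
    (hstep : ∀ n, c (n + 1) = oplusC C (c n) (k n)) (hsafe : ∀ n, c (n + 1) ≠ -1) (n : ℕ) :
    c n ≤ c 0 + ∑ i ∈ Finset.range n, k i := by
  induction n with
  | zero => simp
  | succ n ih =>
    have hle := oplusC_le_add_of_ne_bot (hstep n ▸ hsafe n)
    rw [hstep n, Finset.sum_range_succ]
    linarith

theorem energy_to_safety_sound_general (S : Type) (w : S → S → ℤ)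
    (C : ℕ) (s : ℕ → S) (c : ℕ → ℤ)
    (hc0 : c 0 = (C : ℤ))
    (hstep : ∀ n, c (n + 1) = oplusC C (c n) (w (s n) (s (n + 1))))
    (hsafe : ∀ n, c n ≠ -1) :
    ∀ n, c n ≤ (C : ℤ) + ∑ i ∈ Finset.range n, w (s i) (s (i + 1)) ∧
      0 ≤ (C : ℤ) + ∑ i ∈ Finset.range n, w (s i) (s (i + 1)) := by
  have hbound (n : ℕ) : c n ≤ (C : ℤ) + ∑ i ∈ Finset.range n, w (s i) (s (i + 1)) :=
    hc0 ▸ credit_le_add_sum_of_ne_bot c _ hstep (fun n => hsafe (n + 1)) n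
  have hnonneg : ∀ n, 0 ≤ c n
    | 0 => hc0 ▸ Int.natCast_nonneg C
    | n + 1 => hstep n ▸ oplusC_nonneg_of_ne_bot (hstep n ▸ hsafe (n + 1))
  exact fun n => ⟨hbound n, (hnonneg n).trans (hbound n)⟩

/-- Soundness of the bounded energy-tracking construction: a play of the safety
game `G_C` that never reaches credit `⊥` induces a play of the energy game
satisfying the energy objective `PosEnergy(C)`; indeed the tracked credit is a
lower bound on the true energy level shifted by `C`. -/
theorem energy_to_safety_sound (S : Type) (E : Set (S × S)) (w : S → S → ℤ)
    (C : ℕ) (s : ℕ → S) (c : ℕ → ℤ)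
    (hc0 : c 0 = (C : ℤ))
    (hedge : ∀ n, (s n, s (n + 1)) ∈ E)
    (hstep : ∀ n, c (n + 1) = oplusC C (c n) (w (s n) (s (n + 1))))
    (hsafe : ∀ n, c n ≠ -1) :
    ∀ n, c n ≤ (C : ℤ) + ∑ i ∈ Finset.range n, w (s i) (s (i + 1)) ∧
      0 ≤ (C : ℤ) + ∑ i ∈ Finset.range n, w (s i) (s (i + 1)) :=
  energy_to_safety_sound_general S w C s c hc0 hstep hsafe
end
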